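/- Let d ≥ 1, α, β > 0, x0 ∈ ℝ^d, λ1, λ2 ≥ 0, and assume: (i) f1, f2 : ℝ^d × ℝ^d → [0,∞) are C² with Hess f1(z,x) ⪰ λ1·I_{2d}, ∇²_x f2(z,x) ⪰ λ2·I_d, and x·∇_x f_i(z,x) ≥ −a_i for constants a_i > 0 (i = 1,2); (ii) ρ̃ is a probability measure on ℝ^d with an L¹ density such that log ρ̃ ∈ C²(ℝ^d) and ∇²_z log ρ̃(z) ⪯ −λ̃·I_d for some λ̃ > 0; (iii) W : ℝ^d → [0,∞) is C², convex, symmetric, with z·∇W(z) ≥ −D and ‖∇W(z)‖ ≤ D(1+‖z‖) for some D > 0; (iv) ∇²_z f1(z,x) ⪯ Λ1·I_d for all (z,x) and sup_{‖x‖≤R} ∫ f2(z,x) dρ̄(z) < ∞ for every R > 0, where ρ̄ is a fixed probability measure on ℝ^d; and (v) αλ̃ > Λ1. Let A be the set of probability measures ρ on ℝ^d with finite second moment and KL(ρ|ρ̃) < ∞. Then the functional G_b(ρ) := inf_{x ∈ ℝ^d} G_c(ρ,x) is bounded above on A: there exists M ∈ ℝ such that G_b(ρ) ≤ M for all ρ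 ∈ A. -/

import Mathlib

/-!
Evaluate the infimum at `x = x0`. There `W ≥ 0` and the bound on `∫ f2(·, x0) dρ̄` leave
`G_c(ρ, x0) ≤ ∫ f1(·, x0) dρ − α KL(ρ|ρ̃) + C`. The Hessian bound `Λ1` gives
`f1(z, x0) ≤ A + α c ‖z‖²` for every `c > Λ1 / (2α)`, and the Donsker–Varadhan inequality gives
`c ∫ ‖z‖² dρ ≤ KL(ρ|ρ̃) + log ∫ exp (c ‖z‖²) dρ̃`, which is finite for `c < λ̃ / 2` because
`log ρ̃ ≤ A' − b ‖z‖²` for every `b < λ̃ / 2`. Assumption (v) leaves room for such a `c`, and then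
the two Kullback–Leibler terms cancel.
-/

open MeasureTheory
open scoped ENNReal RealInnerProductSpace

noncomputable section

/-- The competitive-case energy functional `G_c(ρ, x)`; here the Kullback–Leibler term is
written with the Radon–Nikodym derivative of `ρ` with respect to the reference measure
`ρ̃`, and `(W∗ρ)(z) = ∫ W(z − z') dρ(z')`. -/
noncomputable def Gc {d : ℕ}
    (f1 f2 : EuclideanSpace ℝ (Fin d) → EuclideanSpace ℝ (Fin d) → ℝ) (W : EuclideanSpace ℝ (Fin d) → ℝ)
    (ρb ρt : Measure (EuclideanSpace ℝ (Fin d))) (α β : ℝ) (x0 : EuclideanSpace ℝ (Fin d))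
    (ρ : Measure (EuclideanSpace ℝ (Fin d))) (x : EuclideanSpace ℝ (Fin d)) : ℝ :=
  (∫ z, f1 z x ∂ρ) + (∫ z, f2 z x ∂ρb) + (β / 2) * ‖x - x0‖ ^ 2
    - α * (∫ z, Real.log ((ρ.rnDeriv ρt z).toReal) ∂ρ)
    - (1 / 2) * (∫ z, (∫ z', W (z - z') ∂ρ) ∂ρ)

/-- The admissible set `A`: probability measures with finite second moment and finite
Kullback–Leibler divergence with respect to `ρ̃` (i.e. `ρ ≪ ρ̃` and the log-likelihood
ratio is `ρ`-integrable). -/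
def Aset {d : ℕ} (ρt : Measure (EuclideanSpace ℝ (Fin d))) : Set (Measure (EuclideanSpace ℝ (Fin d))) :=
  {ρ | IsProbabilityMeasure ρ ∧ Integrable (fun z => ‖z‖ ^ 2) ρ ∧ ρ ≪ ρt ∧
    Integrable (fun z => Real.log ((ρ.rnDeriv ρt z).toReal)) ρ}

open Real Set

lemma le_add_deriv_add_half_of_deriv2_le {g g' g'' : ℝ → ℝ}
    (hg : ∀ t, HasDerivAt g (g' t) t) (hg' : ∀ t, HasDerivAt g' (g'' t) t)
    {K : ℝ} (hK : ∀ t, g'' t ≤ K) : g 1 ≤ g 0 + g' 0 + K / 2 := by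
  have hd : ∀ t, HasDerivAt (fun s => K * s ^ 2 / 2 - g s) (K * t - g' t) t := fun t =>
    ((((hasDerivAt_pow 2 t).const_mul K).div_const 2).sub (hg t)).congr_deriv (by ring)
  have hd' : ∀ t, HasDerivAt (fun s => K * s - g' s) (K - g'' t) t := fun t =>
    (((hasDerivAt_id' t).const_mul K).sub (hg' t)).congr_deriv (by ring)
  have hconv : ConvexOn ℝ univ (fun s => K * s ^ 2 / 2 - g s) :=
    convexOn_of_hasDerivWithinAt2_nonneg convex_univ
      (fun t _ => (hd t).continuousAt.continuousWithinAt)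
      (fun t _ => (hd t).hasDerivWithinAt) (fun t _ => (hd' t).hasDerivWithinAt)
      (fun t _ => sub_nonneg.2 (hK t))
  have hslope := hconv.le_slope_of_hasDerivAt (mem_univ 0) (mem_univ 1) zero_lt_one (hd 0)
  rw [slope_def_field, sub_zero, div_one] at hslope
  linarith

section QuadraticBound

variable {E : Type*} [NormedAddCommGroup E] [NormedSpace ℝ E]

lemma le_add_norm_fderiv_mul_add_of_iteratedFDeriv_two_le {f : E → ℝ} (hf : ContDiff ℝ 2 f)
    {C : ℝ} (hC : ∀ x v, iteratedFDeriv ℝ 2 f x ![v, v] ≤ C * ‖v‖ ^ 2) (z : E) :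
    f z ≤ f 0 + ‖fderiv ℝ f 0‖ * ‖z‖ + C / 2 * ‖z‖ ^ 2 := by
  have hline : ∀ t : ℝ, HasDerivAt (fun s : ℝ => s • z) z t := fun t => by
    simpa using (hasDerivAt_id t).smul_const z
  have hf1 : Differentiable ℝ f := hf.differentiable (by norm_num)
  have hf2 : Differentiable ℝ (fderiv ℝ f) :=
    (hf.fderiv_right (m := 1) (by norm_num)).differentiable (by norm_num)
  have hg : ∀ t : ℝ, HasDerivAt (fun s : ℝ => f (s • z)) (fderiv ℝ f (t • z) z) t := fun t =>
    (hf1 _).hasFDerivAt.comp_hasDerivAt t (hline t)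
  have hg' : ∀ t : ℝ, HasDerivAt (fun s : ℝ => fderiv ℝ f (s • z) z)
      (fderiv ℝ (fderiv ℝ f) (t • z) z z) t := fun t => by
    simpa using ((hf2 _).hasFDerivAt.comp_hasDerivAt t (hline t)).clm_apply (hasDerivAt_const t z)
  have hK : ∀ t : ℝ, fderiv ℝ (fderiv ℝ f) (t • z) z z ≤ C * ‖z‖ ^ 2 := fun t => by
    simpa [iteratedFDeriv_two_apply] using hC (t • z) z
  have htaylor := le_add_deriv_add_half_of_deriv2_le hg hg' hK
  have hlin : fderiv ℝ f 0 z ≤ ‖fderiv ℝ f 0‖ * ‖z‖ :=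
    (le_abs_self _).trans ((fderiv ℝ f 0).le_opNorm z)
  simp only [one_smul, zero_smul] at htaylor
  linarith

lemma mul_le_mul_sq_add_sq_div {N t ε : ℝ} (hε : 0 < ε) :
    N * t ≤ ε * t ^ 2 + N ^ 2 / (4 * ε) := by
  have : N ^ 2 / (4 * ε) * (4 * ε) = N ^ 2 := div_mul_cancel₀ _ (by positivity)
  nlinarith [sq_nonneg (2 * ε * t - N)]

lemma exists_le_add_mul_sq_of_iteratedFDeriv_two_le {f : E → ℝ} (hf : ContDiff ℝ 2 f)
    {C : ℝ} (hC : ∀ x v, iteratedFDeriv ℝ 2 f x ![v, v] ≤ C * ‖v‖ ^ 2) {C' : ℝ}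
    (hCC' : C / 2 < C') : ∃ A, ∀ z, f z ≤ A + C' * ‖z‖ ^ 2 := by
  refine ⟨f 0 + ‖fderiv ℝ f 0‖ ^ 2 / (4 * (C' - C / 2)), fun z => ?_⟩
  have := le_add_norm_fderiv_mul_add_of_iteratedFDeriv_two_le hf hC z
  have := mul_le_mul_sq_add_sq_div (N := ‖fderiv ℝ f 0‖) (t := ‖z‖) (sub_pos.2 hCC')
  linarith

lemma exists_le_exp_sub_mul_sq_of_iteratedFDeriv_two_log_le {p : E → ℝ} (hp : ∀ z, 0 < p z)
    (hlog : ContDiff ℝ 2 fun z => log (p z)) {l : ℝ}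
    (hl : ∀ z v, iteratedFDeriv ℝ 2 (fun z' => log (p z')) z ![v, v] ≤ -l * ‖v‖ ^ 2) {b : ℝ}
    (hb : b < l / 2) : ∃ A, ∀ z, p z ≤ exp (A - b * ‖z‖ ^ 2) := by
  obtain ⟨A, hA⟩ := exists_le_add_mul_sq_of_iteratedFDeriv_two_le hlog hl (C' := -b) (by linarith)
  refine ⟨A, fun z => ?_⟩
  rw [← exp_log (hp z)]
  exact exp_le_exp.2 (by linarith [hA z])

end QuadraticBound

section Gaussian

variable {V : Type*} [NormedAddCommGroup V] [InnerProductSpace ℝ V] [FiniteDimensional ℝ V]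
  [MeasurableSpace V] [BorelSpace V]

lemma integrable_exp_neg_mul_sq_norm {b : ℝ} (hb : 0 < b) :
    Integrable (fun v : V => exp (-b * ‖v‖ ^ 2)) := by
  refine (GaussianFourier.integrable_cexp_neg_mul_sq_norm_add (b := (b : ℂ))
    (by simpa using hb) 0 (0 : V)).norm.congr (ae_of_all _ fun v => ?_)
  simp [Complex.norm_exp, ← Complex.ofReal_pow]

lemma integrable_exp_mul_sq_norm_withDensity {p : V → ℝ} (hp : Measurable p) {A b c : ℝ}
    (hcb : c < b) (hpb : ∀ z, p z ≤ exp (A - b * ‖z‖ ^ 2)) :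
    Integrable (fun z => exp (c * ‖z‖ ^ 2))
      (volume.withDensity fun z => ENNReal.ofReal (p z)) := by
  rw [integrable_withDensity_iff hp.ennreal_ofReal (ae_of_all _ fun _ => ENNReal.ofReal_lt_top)]
  refine ((integrable_exp_neg_mul_sq_norm (sub_pos.2 hcb)).const_mul (exp A)).mono'
    (by fun_prop) (ae_of_all _ fun z => ?_)
  rw [ENNReal.toReal_ofReal', norm_mul, norm_of_nonneg (exp_pos _).le,
    norm_of_nonneg (le_max_right _ _)]
  calc exp (c * ‖z‖ ^ 2) * max (p z) 0 ≤ exp (c * ‖z‖ ^ 2) * exp (A - b * ‖z‖ ^ 2) :=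
        mul_le_mul_of_nonneg_left (max_le (hpb z) (exp_pos _).le) (exp_pos _).le
    _ = exp A * exp (-(b - c) * ‖z‖ ^ 2) := by rw [← exp_add, ← exp_add]; ring_nf

end Gaussian

section KullbackLeibler

variable {X : Type*} [MeasurableSpace X] {μ ν : Measure X}

/-- The Donsker–Varadhan inequality: Gibbs' inequality for `μ` against the tilted measure
`ν.tilted φ`. -/
lemma integral_le_integral_llr_add_log_integral_exp [IsProbabilityMeasure μ] [SigmaFinite ν]
    (hμν : μ ≪ ν) (hllr : Integrable (llr μ ν) μ) {φ : X → ℝ} (hφμ : Integrable φ μ)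
    (hφν : Integrable (fun x => exp (φ x)) ν) :
    ∫ x, φ x ∂μ ≤ ∫ x, llr μ ν x ∂μ + log (∫ x, exp (φ x) ∂ν) := by
  have : NeZero ν := ⟨by rintro rfl; exact IsProbabilityMeasure.ne_zero μ (by simpa using hμν)⟩
  have : IsProbabilityMeasure (ν.tilted φ) := isProbabilityMeasure_tilted hφν
  have hgibbs := InformationTheory.integral_llr_add_sub_measure_univ_nonneg
    (hμν.trans (absolutelyContinuous_tilted hφν)) (integrable_llr_tilted_right hμν hφμ hllr hφν)
  rw [integral_llr_tilted_right hμν hφμ hφν hllr] at hgibbs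
  simp only [probReal_univ] at hgibbs
  linarith

lemma integral_le_add_mul_integral_llr_add_log_integral_exp [IsProbabilityMeasure μ]
    [SigmaFinite ν] (hμν : μ ≪ ν) (hllr : Integrable (llr μ ν) μ) {f φ : X → ℝ} {A a : ℝ}
    (ha : 0 ≤ a) (hf : ∀ x, 0 ≤ f x) (hfφ : ∀ x, f x ≤ A + a * φ x) (hφμ : Integrable φ μ)
    (hφν : Integrable (fun x => exp (φ x)) ν) :
    ∫ x, f x ∂μ ≤ A + a * (∫ x, llr μ ν x ∂μ + log (∫ x, exp (φ x) ∂ν)) := by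
  calc ∫ x, f x ∂μ ≤ ∫ x, A + a * φ x ∂μ :=
        integral_mono_of_nonneg (ae_of_all _ hf) ((integrable_const A).add (hφμ.const_mul a))
          (ae_of_all _ hfφ)
    _ = A + a * ∫ x, φ x ∂μ := by
        rw [integral_add (integrable_const A) (hφμ.const_mul a), integral_const_mul]
        simp
    _ ≤ A + a * (∫ x, llr μ ν x ∂μ + log (∫ x, exp (φ x) ∂ν)) := by
        gcongr
        exact integral_le_integral_llr_add_log_integral_exp hμν hllr hφμ hφν

end KullbackLeibler

lemma integral_le_max_zero_of_lintegral_ofReal_le {X : Type*} [MeasurableSpace X]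
    {μ : Measure X} {f : X → ℝ} (hf : ∀ x, 0 ≤ f x) {C : ℝ}
    (hC : ∫⁻ x, ENNReal.ofReal (f x) ∂μ ≤ ENNReal.ofReal C) : ∫ x, f x ∂μ ≤ max C 0 :=
  calc ∫ x, f x ∂μ ≤ ‖∫ x, f x ∂μ‖ := le_norm_self _
    _ ≤ (∫⁻ x, ENNReal.ofReal ‖f x‖ ∂μ).toReal := norm_integral_le_lintegral_norm f
    _ ≤ max C 0 := by
        simp_rw [norm_of_nonneg (hf _)]
        exact ENNReal.toReal_le_of_le_ofReal (le_max_right _ _)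
          (hC.trans (ENNReal.ofReal_le_ofReal (le_max_left _ _)))

-- The `max` with `0` covers the junk value `⨅ j, f j = 0` of a family unbounded below.
lemma iInf_le_max_zero_of_le {ι : Type*} {f : ι → ℝ} {M : ℝ} (i : ι) (h : f i ≤ M) :
    ⨅ j, f j ≤ max M 0 := by
  by_cases hf : BddBelow (range f)
  · exact (ciInf_le hf i).trans (h.trans (le_max_left _ _))
  · rw [Real.iInf_of_not_bddBelow hf]
    exact le_max_right _ _

theorem stmt16_general {d : ℕ} (α β : ℝ) (hα : 0 < α)
    (x0 : EuclideanSpace ℝ (Fin d))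
    -- Assumption (i): convexity and growth of `f1`, `f2`
    (f1 f2 : EuclideanSpace ℝ (Fin d) → EuclideanSpace ℝ (Fin d) → ℝ)
    (hf1nn : ∀ z x, 0 ≤ f1 z x) (hf2nn : ∀ z x, 0 ≤ f2 z x)
    (hf1C : ContDiff ℝ 2 (fun p : EuclideanSpace ℝ (Fin d) × EuclideanSpace ℝ (Fin d) => f1 p.1 p.2))
    -- Assumption (ii): shape of the reference distribution `ρ̃`
    (ρtd : EuclideanSpace ℝ (Fin d) → ℝ) (hρtd_pos : ∀ z, 0 < ρtd z)
    (hlog : ContDiff ℝ 2 (fun z : EuclideanSpace ℝ (Fin d) => Real.log (ρtd z)))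
    (lamt : ℝ)
    (hloghess : ∀ z v : EuclideanSpace ℝ (Fin d),
      iteratedFDeriv ℝ 2 (fun z' => Real.log (ρtd z')) z ![v, v] ≤ -lamt * ‖v‖ ^ 2)
    (ρt : Measure (EuclideanSpace ℝ (Fin d)))
    (hρt : ρt = volume.withDensity (fun z => ENNReal.ofReal (ρtd z)))
    -- Assumption (iii): the interaction kernel `W`
    (W : EuclideanSpace ℝ (Fin d) → ℝ) (hWnn : ∀ z, 0 ≤ W z)
    -- Assumption (iv): upper bounds for `f1` and `f2`
    (Lam1 : ℝ)
    (hf1hess_up : ∀ (z x v : EuclideanSpace ℝ (Fin d)),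
      iteratedFDeriv ℝ 2 (fun z' => f1 z' x) z ![v, v] ≤ Lam1 * ‖v‖ ^ 2)
    (ρb : Measure (EuclideanSpace ℝ (Fin d)))
    (hf2sup : ∀ R : ℝ, 0 < R → ∃ C : ℝ, ∀ x : EuclideanSpace ℝ (Fin d), ‖x‖ ≤ R →
      ∫⁻ z, ENNReal.ofReal (f2 z x) ∂ρb ≤ ENNReal.ofReal C)
    -- Assumption (v)
    (hcoerc : Lam1 < α * lamt) :
    ∃ M : ℝ, ∀ ρ ∈ Aset ρt, (⨅ x : EuclideanSpace ℝ (Fin d), Gc f1 f2 W ρb ρt α β x0 ρ x) ≤ M := by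
  have hcoerc' : Lam1 / (2 * α) < lamt / 2 := by
    rw [div_lt_iff₀ (by positivity)]; linarith
  obtain ⟨c, hLc, hc⟩ := exists_between hcoerc'
  obtain ⟨b, hcb, hb⟩ := exists_between hc
  obtain ⟨A2, hρtd_le⟩ :=
    exists_le_exp_sub_mul_sq_of_iteratedFDeriv_two_log_le hρtd_pos hlog hloghess hb
  have hρtd_cont : Continuous ρtd :=
    (continuous_exp.comp hlog.continuous).congr fun z => exp_log (hρtd_pos z)
  have hZ : Integrable (fun z => exp (c * ‖z‖ ^ 2)) ρt :=
    hρt ▸ integrable_exp_mul_sq_norm_withDensity hρtd_cont.measurable hcb hρtd_le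
  have : SigmaFinite ρt := hρt ▸ inferInstance
  obtain ⟨A1, hA1⟩ := exists_le_add_mul_sq_of_iteratedFDeriv_two_le
    (hf1C.comp (contDiff_id.prodMk contDiff_const)) (hf1hess_up · x0) (C' := α * c)
    (by rw [div_lt_iff₀ (by positivity)] at hLc; linarith)
  obtain ⟨C2, hC2⟩ := hf2sup (‖x0‖ + 1) (by positivity)
  have hf2 := integral_le_max_zero_of_lintegral_ofReal_le (μ := ρb) (fun z => hf2nn z x0)
    (hC2 x0 (by linarith))
  refine ⟨max (A1 + α * log (∫ z, exp (c * ‖z‖ ^ 2) ∂ρt) + max C2 0) 0,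
    fun ρ ⟨hprob, h2mom, hac, hllr⟩ => iInf_le_max_zero_of_le x0 ?_⟩
  have hf1 := integral_le_add_mul_integral_llr_add_log_integral_exp hac hllr hα.le
    (fun z => hf1nn z x0) (fun z => (hA1 z).trans_eq (by ring)) (h2mom.const_mul c) hZ
  have hW : 0 ≤ ∫ z, ∫ z', W (z - z') ∂ρ ∂ρ :=
    integral_nonneg fun z => integral_nonneg fun z' => hWnn _
  rw [Gc, sub_self, norm_zero]
  change _ + _ + _ - α * ∫ z, llr ρ ρt z ∂ρ - _ ≤ _
  linarith

/-- boundedness from above of `G_b` on `A`, step (1) in the proof of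
Proposition C.9: there is `M ∈ ℝ` with `G_b(ρ) = inf_x G_c(ρ,x) ≤ M` for all `ρ ∈ A`. -/
theorem stmt16 {d : ℕ} (hd : 1 ≤ d) (α β : ℝ) (hα : 0 < α) (hβ : 0 < β)
    (x0 : EuclideanSpace ℝ (Fin d)) (lam1 lam2 : ℝ) (hlam1 : 0 ≤ lam1) (hlam2 : 0 ≤ lam2)
    -- Assumption (i): convexity and growth of `f1`, `f2`
    (f1 f2 : EuclideanSpace ℝ (Fin d) → EuclideanSpace ℝ (Fin d) → ℝ)
    (hf1nn : ∀ z x, 0 ≤ f1 z x) (hf2nn : ∀ z x, 0 ≤ f2 z x)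
    (hf1C : ContDiff ℝ 2 (fun p : EuclideanSpace ℝ (Fin d) × EuclideanSpace ℝ (Fin d) => f1 p.1 p.2))
    (hf2C : ContDiff ℝ 2 (fun p : EuclideanSpace ℝ (Fin d) × EuclideanSpace ℝ (Fin d) => f2 p.1 p.2))
    (hf1hess : ∀ (z x v w : EuclideanSpace ℝ (Fin d)),
      lam1 * (‖v‖ ^ 2 + ‖w‖ ^ 2) ≤
        iteratedFDeriv ℝ 2 (fun p : EuclideanSpace ℝ (Fin d) × EuclideanSpace ℝ (Fin d) => f1 p.1 p.2) (z, x) ![(v, w), (v, w)])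
    (hf2hess : ∀ (z x v : EuclideanSpace ℝ (Fin d)),
      lam2 * ‖v‖ ^ 2 ≤ iteratedFDeriv ℝ 2 (fun x' => f2 z x') x ![v, v])
    (a1 a2 : ℝ) (ha1 : 0 < a1) (ha2 : 0 < a2)
    (hf1a : ∀ z x, -a1 ≤ ⟪x, gradient (fun x' => f1 z x') x⟫)
    (hf2a : ∀ z x, -a2 ≤ ⟪x, gradient (fun x' => f2 z x') x⟫)
    -- Assumption (ii): shape of the reference distribution `ρ̃`
    (ρtd : EuclideanSpace ℝ (Fin d) → ℝ) (hρtd_pos : ∀ z, 0 < ρtd z)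
    (hρtd_int : Integrable ρtd volume) (hρtd_one : ∫ z, ρtd z = 1)
    (hlog : ContDiff ℝ 2 (fun z : EuclideanSpace ℝ (Fin d) => Real.log (ρtd z)))
    (lamt : ℝ) (hlamt : 0 < lamt)
    (hloghess : ∀ z v : EuclideanSpace ℝ (Fin d),
      iteratedFDeriv ℝ 2 (fun z' => Real.log (ρtd z')) z ![v, v] ≤ -lamt * ‖v‖ ^ 2)
    (ρt : Measure (EuclideanSpace ℝ (Fin d)))
    (hρt : ρt = volume.withDensity (fun z => ENNReal.ofReal (ρtd z)))
    -- Assumption (iii): the interaction kernel `W`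
    (W : EuclideanSpace ℝ (Fin d) → ℝ) (hWnn : ∀ z, 0 ≤ W z)
    (hWC : ContDiff ℝ 2 W) (hWconv : ConvexOn ℝ Set.univ W)
    (hWsymm : ∀ z, W (-z) = W z)
    (D : ℝ) (hD : 0 < D)
    (hWD1 : ∀ z, -D ≤ ⟪z, gradient W z⟫)
    (hWD2 : ∀ z, ‖gradient W z‖ ≤ D * (1 + ‖z‖))
    -- Assumption (iv): upper bounds for `f1` and `f2`
    (Lam1 : ℝ)
    (hf1hess_up : ∀ (z x v : EuclideanSpace ℝ (Fin d)),
      iteratedFDeriv ℝ 2 (fun z' => f1 z' x) z ![v, v] ≤ Lam1 * ‖v‖ ^ 2)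
    (ρb : Measure (EuclideanSpace ℝ (Fin d))) [IsProbabilityMeasure ρb]
    (hf2sup : ∀ R : ℝ, 0 < R → ∃ C : ℝ, ∀ x : EuclideanSpace ℝ (Fin d), ‖x‖ ≤ R →
      ∫⁻ z, ENNReal.ofReal (f2 z x) ∂ρb ≤ ENNReal.ofReal C)
    -- Assumption (v)
    (hcoerc : Lam1 < α * lamt) :
    ∃ M : ℝ, ∀ ρ ∈ Aset ρt, (⨅ x : EuclideanSpace ℝ (Fin d), Gc f1 f2 W ρb ρt α β x0 ρ x) ≤ M :=
  stmt16_general α β hα x0 f1 f2 hf1nn hf2nn hf1C ρtd hρtd_pos hlog lamt hloghess ρt hρt W hWnn Lam1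
    hf1hess_up ρb hf2sup hcoerc
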